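/- arXiv:1403.1801 — 3 statements merged into one kernel-verified Lean document; each statement's English description precedes it below -/
import Mathlib

section
/- For every integer k ≥ 1, the 2-adic valuation of s_{k,k} is at least wt(k) − 2, where s_{k,k} = (s_k² − s_{2k})/2. -/
open Nat

/-- `wt k` is the Hamming weight of `k`, i.e. the number of ones in its binary expansion. -/
def wt (k : ℕ) : ℕ := (Nat.digits 2 k).sum

/-- `sL k = 2^(2k) * (2^(2k-1) - 1) * |B_(2k)| / (2k)!` is the coefficient of `p_k`
in the k-th Hirzebruch L-polynomial. -/
noncomputable def sL (k : ℕ) : ℚ :=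
  2 ^ (2 * k) * (2 ^ (2 * k - 1) - 1) * |bernoulli (2 * k)| / ((2 * k)! : ℚ)

/-- `sLL k = (sL k ^ 2 - sL (2k)) / 2` is the coefficient of `p_k ^ 2`
in the 2k-th Hirzebruch L-polynomial. -/
noncomputable def sLL (k : ℕ) : ℚ := (sL k ^ 2 - sL (2 * k)) / 2


open Finset
def Zp (x : ℚ) : Prop := ∃ a b : ℤ, Odd b ∧ x * b = a

lemma Zp_int (n : ℤ) : Zp (n : ℚ) := ⟨n, 1, odd_one, by simp⟩

lemma Zp_mul (x y : ℚ) (hx : Zp x) (hy : Zp y) : Zp (x * y) := by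
  obtain ⟨a, b, hb, hab⟩ := hx
  obtain ⟨c, d, hd, hcd⟩ := hy
  exact ⟨a * c, b * d, hb.mul hd, by push_cast; rw [← hab, ← hcd]; ring⟩

lemma Zp_add (x y : ℚ) (hx : Zp x) (hy : Zp y) : Zp (x + y) := by
  obtain ⟨a, b, hb, hab⟩ := hx
  obtain ⟨c, d, hd, hcd⟩ := hy
  refine ⟨a * d + c * b, b * d, hb.mul hd, ?_⟩
  push_cast
  rw [← hab, ← hcd]; ring

lemma Zp_sum {s : Finset ℕ} {f : ℕ → ℚ} (h : ∀ i ∈ s, Zp (f i)) :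
    Zp (∑ i ∈ s, f i) := by
  induction s using Finset.induction_on with
  | empty => simpa using Zp_int 0
  | insert _ _ hni ih =>
    rw [Finset.sum_insert hni]
    exact Zp_add _ _ (h _ (Finset.mem_insert_self _ _))
      (ih fun i hi => h i (Finset.mem_insert_of_mem hi))

/-- The key identity: for `p ≥ 1`,
`(p+1 : ℚ) = ∑ i in range (p+1), bernoulli i * (p+1).choose i * 2^(p+1-i)`. -/
private lemma bernoulli_ident (p : ℕ) (hp : 1 ≤ p) :
    ((p : ℚ) + 1) = ∑ i ∈ range (p + 1),
      bernoulli i * ((p + 1).choose i) * (2 : ℚ) ^ (p + 1 - i) := by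
  have h := _root_.sum_range_pow 2 p
  have hl : (∑ k ∈ range 2, (k : ℚ) ^ p) = 1 := by
    rw [Finset.sum_range_succ, Finset.sum_range_one]
    simp [zero_pow (by omega : p ≠ 0)]
  rw [hl] at h
  have hp1 : ((p : ℚ) + 1) ≠ 0 := by positivity
  push_cast at h
  rw [eq_comm] at h
  calc ((p : ℚ) + 1) = (∑ i ∈ range (p + 1),
        bernoulli i * ((p + 1).choose i) * (2 : ℚ) ^ (p + 1 - i) / ((p : ℚ) + 1)) * ((p:ℚ)+1) := by
        rw [h, one_mul]
    _ = _ := by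
        rw [Finset.sum_mul]
        refine Finset.sum_congr rfl fun i hi => ?_
        rw [div_mul_cancel₀ _ hp1]

lemma bernoulli_main : ∀ p : ℕ, Zp (2 * bernoulli p) ∧
    (Even p → 1 ≤ p → ∃ a b : ℤ, Odd a ∧ Odd b ∧ 2 * bernoulli p * b = a) := by
  intro p
  induction p using Nat.strong_induction_on with
  | _ p ih =>
    rcases Nat.lt_or_ge p 2 with h2 | h2
    · interval_cases p
      · refine ⟨⟨2, 1, odd_one, by norm_num [bernoulli_zero]⟩, fun he h1 => by omega⟩
      · refine ⟨⟨-1, 1, odd_one, by norm_num [bernoulli_one]⟩, fun he h1 => ?_⟩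
        simp [Nat.even_iff] at he
    rcases Nat.even_or_odd p with hpe | hpo
    · -- main case : p even, 2 ≤ p
      have hid := bernoulli_ident p (by omega)
      rw [Finset.sum_range_succ] at hid
      have hch : ((p + 1).choose p) = p + 1 := Nat.choose_succ_self_right p
      have hpow : p + 1 - p = 1 := by omega
      rw [hch, hpow] at hid
      set y : ℚ := ∑ i ∈ Finset.range p,
        (((p + 1).choose i * 2 ^ (p - 1 - i) : ℕ) : ℚ) * (2 * bernoulli i) with hy
      have hsum : ∑ i ∈ Finset.range p, bernoulli i * ((p + 1).choose i) * (2 : ℚ) ^ (p + 1 - i)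
          = 2 * y := by
        rw [hy, Finset.mul_sum]
        refine Finset.sum_congr rfl fun i hi => ?_
        rw [Finset.mem_range] at hi
        have he : p + 1 - i = (p - 1 - i) + 2 := by omega
        rw [he]
        push_cast
        ring
      rw [hsum] at hid
      have hZy : Zp y := by
        refine Zp_sum fun i hi => Zp_mul _ _ ?_ (ih i (Finset.mem_range.mp hi)).1
        exact_mod_cast Zp_int (((p + 1).choose i * 2 ^ (p - 1 - i) : ℕ) : ℤ)
      obtain ⟨c, b, hb, hcb⟩ := hZy
      have h5 : 2 * bernoulli p * ((p : ℚ) + 1) = ((p : ℚ) + 1) - 2 * y := by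
        push_cast at hid
        linear_combination -hid
      have hBodd : Odd ((p + 1 : ℤ) * b) := by
        refine Odd.mul ?_ hb
        have : Even (p : ℤ) := by exact_mod_cast hpe.natCast (α := ℤ)
        exact this.add_one
      have hkey : 2 * bernoulli p * (((p + 1 : ℤ) * b : ℤ) : ℚ)
          = ((((p + 1 : ℤ) * b - 2 * c) : ℤ) : ℚ) := by
        push_cast
        linear_combination (b : ℚ) * h5 - 2 * hcb
      have haodd : Odd ((p + 1 : ℤ) * b - 2 * c) := hBodd.sub_even (even_two_mul c)
      exact ⟨⟨_, _, hBodd, hkey⟩, fun _ _ => ⟨_, _, haodd, hBodd, hkey⟩⟩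
    · -- p odd, ≥ 3
      have hz : bernoulli p = 0 := by
        rw [bernoulli_eq_bernoulli'_of_ne_one (by omega)]
        exact bernoulli'_eq_zero_of_odd hpo (by omega)
      refine ⟨by rw [hz]; simpa using Zp_int 0, fun he _ => ?_⟩
      exact absurd he (Nat.not_even_iff_odd.mpr hpo)

lemma padicValRat_int_odd {a : ℤ} (ha : Odd a) : padicValRat 2 (a : ℚ) = 0 := by
  rw [padicValRat.of_int]
  norm_cast
  refine padicValInt.eq_zero_of_not_dvd fun h => ?_
  obtain ⟨c, hc⟩ := h
  have := Int.odd_iff.mp ha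
  push_cast at hc
  omega

lemma padicValRat_two' : padicValRat 2 (2 : ℚ) = 1 := by
  have := padicValRat.self (p := 2) (by norm_num)
  simpa using this

lemma bern_val (k : ℕ) (hk : 1 ≤ k) :
    bernoulli (2 * k) ≠ 0 ∧ padicValRat 2 (bernoulli (2 * k)) = -1 := by
  obtain ⟨a, b, ha, hb, key⟩ := (bernoulli_main (2 * k)).2 (even_two_mul k) (by omega)
  have hbz : b ≠ 0 := by have := Int.odd_iff.mp hb; omega
  have haz : a ≠ 0 := by have := Int.odd_iff.mp ha; omega
  have hb0 : (b : ℚ) ≠ 0 := Int.cast_ne_zero.mpr hbz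
  have ha0 : (a : ℚ) ≠ 0 := Int.cast_ne_zero.mpr haz
  have hB : bernoulli (2 * k) ≠ 0 := by
    intro h
    rw [h] at key
    simp only [mul_zero, zero_mul] at key
    exact ha0 key.symm
  have hBeq : bernoulli (2 * k) = (a : ℚ) / (2 * b) := by
    field_simp
    linear_combination key
  refine ⟨hB, ?_⟩
  rw [hBeq, padicValRat.div ha0 (mul_ne_zero two_ne_zero hb0),
    padicValRat.mul two_ne_zero hb0, padicValRat_two', padicValRat_int_odd ha,
    padicValRat_int_odd hb]
  norm_num

lemma wt_two_mul (k : ℕ) (hk : 1 ≤ k) : wt (2 * k) = wt k := by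
  unfold wt
  rw [Nat.digits_def' (by norm_num : 1 < 2) (by omega : 0 < 2 * k)]
  simp [Nat.mul_div_cancel_left k (by norm_num : 0 < 2), Nat.mul_mod_right]

lemma wt_pos (k : ℕ) (hk : 1 ≤ k) : 1 ≤ wt k := by
  induction k using Nat.strong_induction_on with
  | _ k ih =>
    unfold wt
    rw [Nat.digits_def' (by norm_num : 1 < 2) (by omega : 0 < k)]
    rcases Nat.lt_or_ge k 2 with h | h
    · interval_cases k
      simp
    · simp only [List.sum_cons]
      have := ih (k / 2) (by omega) (by omega)
      unfold wt at this
      omega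

lemma wt_le (k : ℕ) : wt k ≤ k := Nat.digit_sum_le 2 k

lemma padicValNat_factorial' (n : ℕ) :
    (padicValNat 2 (n !) : ℤ) = n - wt n := by
  have h := sub_one_mul_padicValNat_factorial (p := 2) n
  have h2 := wt_le n
  unfold wt at h2 ⊢
  omega

lemma abs_val (x : ℚ) : padicValRat 2 |x| = padicValRat 2 x := by
  rcases abs_choice x with h | h <;> rw [h]
  exact padicValRat.neg x

lemma sL_val (k : ℕ) (hk : 1 ≤ k) :
    sL k ≠ 0 ∧ padicValRat 2 (sL k) = (wt k : ℤ) - 1 := by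
  obtain ⟨hB, hBval⟩ := bern_val k hk
  have hA : ((2 : ℚ) ^ (2 * k)) ≠ 0 := by positivity
  have hAval : padicValRat 2 ((2 : ℚ) ^ (2 * k)) = 2 * k := by
    rw [padicValRat.pow (2 : ℚ), padicValRat_two']
    push_cast; ring
  -- second factor
  have hcast : ((2 ^ (2 * k - 1) - 1 : ℤ) : ℚ) = (2 : ℚ) ^ (2 * k - 1) - 1 := by push_cast; ring
  have hodd : Odd ((2 : ℤ) ^ (2 * k - 1) - 1) := by
    have : Even ((2 : ℤ) ^ (2 * k - 1)) :=
      (Int.even_pow' (by omega)).mpr (by exact ⟨1, by ring⟩)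
    exact this.sub_odd odd_one
  have hCz : ((2 : ℚ) ^ (2 * k - 1) - 1) ≠ 0 := by
    rw [← hcast]
    exact_mod_cast (by have := Int.odd_iff.mp hodd; omega : (2 : ℤ) ^ (2 * k - 1) - 1 ≠ 0)
  have hCval : padicValRat 2 ((2 : ℚ) ^ (2 * k - 1) - 1) = 0 := by
    rw [← hcast]; exact padicValRat_int_odd hodd
  -- |bernoulli|
  have habsz : |bernoulli (2 * k)| ≠ 0 := abs_ne_zero.mpr hB
  have habsval : padicValRat 2 |bernoulli (2 * k)| = -1 := by rw [abs_val, hBval]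
  -- factorial
  have hFz : (((2 * k)! : ℕ) : ℚ) ≠ 0 := by
    exact_mod_cast (Nat.factorial_ne_zero (2 * k))
  have hFval : padicValRat 2 (((2 * k)! : ℕ) : ℚ) = (2 * k : ℤ) - wt k := by
    rw [padicValRat.of_nat, padicValNat_factorial', wt_two_mul k hk]
    push_cast; ring
  constructor
  · unfold sL
    exact div_ne_zero (mul_ne_zero (mul_ne_zero hA hCz) habsz) hFz
  · unfold sL
    rw [padicValRat.div (mul_ne_zero (mul_ne_zero hA hCz) habsz) hFz,
      padicValRat.mul (mul_ne_zero hA hCz) habsz, padicValRat.mul hA hCz,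
      hAval, hCval, habsval, hFval]
    ring

/-- For every integer `k ≥ 1`, the 2-adic valuation of `s_(k,k)` is at least `wt k - 2`. -/
theorem padicValRat_two_sLL (k : ℕ) (hk : 1 ≤ k) :
    (wt k : ℤ) - 2 ≤ padicValRat 2 (sLL k) := by
  obtain ⟨h1z, h1v⟩ := sL_val k hk
  obtain ⟨h2z, h2v2⟩ := sL_val (2 * k) (by omega)
  have h2v : padicValRat 2 (sL (2 * k)) = (wt k : ℤ) - 1 := by
    rw [h2v2, wt_two_mul k hk]
  have hsq : padicValRat 2 (sL k ^ 2) = 2 * ((wt k : ℤ) - 1) := by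
    rw [padicValRat.pow (sL k), h1v]; push_cast; ring
  have hwt : 1 ≤ wt k := wt_pos k hk
  by_cases hz : sL k ^ 2 - sL (2 * k) = 0
  · have hsll : sLL k = 0 := by rw [sLL, hz]; simp
    rw [hsll, padicValRat.zero]
    have heq : sL k ^ 2 = sL (2 * k) := by linarith [sub_eq_zero.mp hz]
    have : 2 * ((wt k : ℤ) - 1) = (wt k : ℤ) - 1 := by rw [← hsq, ← h2v, heq]
    omega
  · have hval : padicValRat 2 (sLL k) =
        padicValRat 2 (sL k ^ 2 - sL (2 * k)) - 1 := by
      rw [sLL, padicValRat.div hz two_ne_zero, padicValRat_two']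
    have hmin : min (padicValRat 2 (sL k ^ 2)) (padicValRat 2 (- sL (2 * k)))
        ≤ padicValRat 2 (sL k ^ 2 + - sL (2 * k)) := by
      refine padicValRat.min_le_padicValRat_add ?_
      rwa [← sub_eq_add_neg]
    rw [padicValRat.neg, ← sub_eq_add_neg, hsq, h2v] at hmin
    rw [hval]
    have : min (2 * ((wt k : ℤ) - 1)) ((wt k : ℤ) - 1) ≥ (wt k : ℤ) - 1 := by
      apply le_min <;> omega
    omega
end

section
/- There exist integers x and y such that s_{16,16}·x² + s_{32}·y = 1 or s_{16,16}·x² + s_{32}·y = −1; that is, the Hirzebruch signature equation for a 128-dimensional rational projective plane has an integer solution. -/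
open Nat

set_option maxHeartbeats 4000000
private theorem B'5 : bernoulli' 5 = 0 := bernoulli'_eq_zero_of_odd ⟨2, rfl⟩ (by norm_num)
private theorem B'6 : bernoulli' 6 = (1 : ℚ) / 42 := by
  rw [bernoulli'_def]
  norm_num [Finset.sum_range_succ, Nat.choose, bernoulli'_zero, bernoulli'_one, bernoulli'_two, bernoulli'_three, bernoulli'_four, B'5]
private theorem B'7 : bernoulli' 7 = 0 := bernoulli'_eq_zero_of_odd ⟨3, rfl⟩ (by norm_num)
private theorem B'8 : bernoulli' 8 = (-1 : ℚ) / 30 := by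
  rw [bernoulli'_def]
  norm_num [Finset.sum_range_succ, Nat.choose, bernoulli'_zero, bernoulli'_one, bernoulli'_two, bernoulli'_three, bernoulli'_four, B'5, B'6, B'7]
private theorem B'9 : bernoulli' 9 = 0 := bernoulli'_eq_zero_of_odd ⟨4, rfl⟩ (by norm_num)
private theorem B'10 : bernoulli' 10 = (5 : ℚ) / 66 := by
  rw [bernoulli'_def]
  norm_num [Finset.sum_range_succ, Nat.choose, bernoulli'_zero, bernoulli'_one, bernoulli'_two, bernoulli'_three, bernoulli'_four, B'5, B'6, B'7, B'8, B'9]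
private theorem B'11 : bernoulli' 11 = 0 := bernoulli'_eq_zero_of_odd ⟨5, rfl⟩ (by norm_num)
private theorem B'12 : bernoulli' 12 = (-691 : ℚ) / 2730 := by
  rw [bernoulli'_def]
  norm_num [Finset.sum_range_succ, Nat.choose, bernoulli'_zero, bernoulli'_one, bernoulli'_two, bernoulli'_three, bernoulli'_four, B'5, B'6, B'7, B'8, B'9, B'10, B'11]
private theorem B'13 : bernoulli' 13 = 0 := bernoulli'_eq_zero_of_odd ⟨6, rfl⟩ (by norm_num)
private theorem B'14 : bernoulli' 14 = (7 : ℚ) / 6 := by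
  rw [bernoulli'_def]
  norm_num [Finset.sum_range_succ, Nat.choose, bernoulli'_zero, bernoulli'_one, bernoulli'_two, bernoulli'_three, bernoulli'_four, B'5, B'6, B'7, B'8, B'9, B'10, B'11, B'12, B'13]
private theorem B'15 : bernoulli' 15 = 0 := bernoulli'_eq_zero_of_odd ⟨7, rfl⟩ (by norm_num)
private theorem B'16 : bernoulli' 16 = (-3617 : ℚ) / 510 := by
  rw [bernoulli'_def]
  norm_num [Finset.sum_range_succ, Nat.choose, bernoulli'_zero, bernoulli'_one, bernoulli'_two, bernoulli'_three, bernoulli'_four, B'5, B'6, B'7, B'8, B'9, B'10, B'11, B'12, B'13, B'14, B'15]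
private theorem B'17 : bernoulli' 17 = 0 := bernoulli'_eq_zero_of_odd ⟨8, rfl⟩ (by norm_num)
private theorem B'18 : bernoulli' 18 = (43867 : ℚ) / 798 := by
  rw [bernoulli'_def]
  norm_num [Finset.sum_range_succ, Nat.choose, bernoulli'_zero, bernoulli'_one, bernoulli'_two, bernoulli'_three, bernoulli'_four, B'5, B'6, B'7, B'8, B'9, B'10, B'11, B'12, B'13, B'14, B'15, B'16, B'17]
private theorem B'19 : bernoulli' 19 = 0 := bernoulli'_eq_zero_of_odd ⟨9, rfl⟩ (by norm_num)
private theorem B'20 : bernoulli' 20 = (-174611 : ℚ) / 330 := by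
  rw [bernoulli'_def]
  norm_num [Finset.sum_range_succ, Nat.choose, bernoulli'_zero, bernoulli'_one, bernoulli'_two, bernoulli'_three, bernoulli'_four, B'5, B'6, B'7, B'8, B'9, B'10, B'11, B'12, B'13, B'14, B'15, B'16, B'17, B'18, B'19]
private theorem B'21 : bernoulli' 21 = 0 := bernoulli'_eq_zero_of_odd ⟨10, rfl⟩ (by norm_num)
private theorem B'22 : bernoulli' 22 = (854513 : ℚ) / 138 := by
  rw [bernoulli'_def]
  norm_num [Finset.sum_range_succ, Nat.choose, bernoulli'_zero, bernoulli'_one, bernoulli'_two, bernoulli'_three, bernoulli'_four, B'5, B'6, B'7, B'8, B'9, B'10, B'11, B'12, B'13, B'14, B'15, B'16, B'17, B'18, B'19, B'20, B'21]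
private theorem B'23 : bernoulli' 23 = 0 := bernoulli'_eq_zero_of_odd ⟨11, rfl⟩ (by norm_num)
private theorem B'24 : bernoulli' 24 = (-236364091 : ℚ) / 2730 := by
  rw [bernoulli'_def]
  norm_num [Finset.sum_range_succ, Nat.choose, bernoulli'_zero, bernoulli'_one, bernoulli'_two, bernoulli'_three, bernoulli'_four, B'5, B'6, B'7, B'8, B'9, B'10, B'11, B'12, B'13, B'14, B'15, B'16, B'17, B'18, B'19, B'20, B'21, B'22, B'23]
private theorem B'25 : bernoulli' 25 = 0 := bernoulli'_eq_zero_of_odd ⟨12, rfl⟩ (by norm_num)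
private theorem B'26 : bernoulli' 26 = (8553103 : ℚ) / 6 := by
  rw [bernoulli'_def]
  norm_num [Finset.sum_range_succ, Nat.choose, bernoulli'_zero, bernoulli'_one, bernoulli'_two, bernoulli'_three, bernoulli'_four, B'5, B'6, B'7, B'8, B'9, B'10, B'11, B'12, B'13, B'14, B'15, B'16, B'17, B'18, B'19, B'20, B'21, B'22, B'23, B'24, B'25]
private theorem B'27 : bernoulli' 27 = 0 := bernoulli'_eq_zero_of_odd ⟨13, rfl⟩ (by norm_num)
private theorem B'28 : bernoulli' 28 = (-23749461029 : ℚ) / 870 := by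
  rw [bernoulli'_def]
  norm_num [Finset.sum_range_succ, Nat.choose, bernoulli'_zero, bernoulli'_one, bernoulli'_two, bernoulli'_three, bernoulli'_four, B'5, B'6, B'7, B'8, B'9, B'10, B'11, B'12, B'13, B'14, B'15, B'16, B'17, B'18, B'19, B'20, B'21, B'22, B'23, B'24, B'25, B'26, B'27]
private theorem B'29 : bernoulli' 29 = 0 := bernoulli'_eq_zero_of_odd ⟨14, rfl⟩ (by norm_num)
private theorem B'30 : bernoulli' 30 = (8615841276005 : ℚ) / 14322 := by
  rw [bernoulli'_def]
  norm_num [Finset.sum_range_succ, Nat.choose, bernoulli'_zero, bernoulli'_one, bernoulli'_two, bernoulli'_three, bernoulli'_four, B'5, B'6, B'7, B'8, B'9, B'10, B'11, B'12, B'13, B'14, B'15, B'16, B'17, B'18, B'19, B'20, B'21, B'22, B'23, B'24, B'25, B'26, B'27, B'28, B'29]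
private theorem B'31 : bernoulli' 31 = 0 := bernoulli'_eq_zero_of_odd ⟨15, rfl⟩ (by norm_num)
private theorem B'32 : bernoulli' 32 = (-7709321041217 : ℚ) / 510 := by
  rw [bernoulli'_def]
  norm_num [Finset.sum_range_succ, Nat.choose, bernoulli'_zero, bernoulli'_one, bernoulli'_two, bernoulli'_three, bernoulli'_four, B'5, B'6, B'7, B'8, B'9, B'10, B'11, B'12, B'13, B'14, B'15, B'16, B'17, B'18, B'19, B'20, B'21, B'22, B'23, B'24, B'25, B'26, B'27, B'28, B'29, B'30, B'31]
private theorem B'33 : bernoulli' 33 = 0 := bernoulli'_eq_zero_of_odd ⟨16, rfl⟩ (by norm_num)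
private theorem B'34 : bernoulli' 34 = (2577687858367 : ℚ) / 6 := by
  rw [bernoulli'_def]
  norm_num [Finset.sum_range_succ, Nat.choose, bernoulli'_zero, bernoulli'_one, bernoulli'_two, bernoulli'_three, bernoulli'_four, B'5, B'6, B'7, B'8, B'9, B'10, B'11, B'12, B'13, B'14, B'15, B'16, B'17, B'18, B'19, B'20, B'21, B'22, B'23, B'24, B'25, B'26, B'27, B'28, B'29, B'30, B'31, B'32, B'33]
private theorem B'35 : bernoulli' 35 = 0 := bernoulli'_eq_zero_of_odd ⟨17, rfl⟩ (by norm_num)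
private theorem B'36 : bernoulli' 36 = (-26315271553053477373 : ℚ) / 1919190 := by
  rw [bernoulli'_def]
  norm_num [Finset.sum_range_succ, Nat.choose, bernoulli'_zero, bernoulli'_one, bernoulli'_two, bernoulli'_three, bernoulli'_four, B'5, B'6, B'7, B'8, B'9, B'10, B'11, B'12, B'13, B'14, B'15, B'16, B'17, B'18, B'19, B'20, B'21, B'22, B'23, B'24, B'25, B'26, B'27, B'28, B'29, B'30, B'31, B'32, B'33, B'34, B'35]
private theorem B'37 : bernoulli' 37 = 0 := bernoulli'_eq_zero_of_odd ⟨18, rfl⟩ (by norm_num)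
private theorem B'38 : bernoulli' 38 = (2929993913841559 : ℚ) / 6 := by
  rw [bernoulli'_def]
  norm_num [Finset.sum_range_succ, Nat.choose, bernoulli'_zero, bernoulli'_one, bernoulli'_two, bernoulli'_three, bernoulli'_four, B'5, B'6, B'7, B'8, B'9, B'10, B'11, B'12, B'13, B'14, B'15, B'16, B'17, B'18, B'19, B'20, B'21, B'22, B'23, B'24, B'25, B'26, B'27, B'28, B'29, B'30, B'31, B'32, B'33, B'34, B'35, B'36, B'37]
private theorem B'39 : bernoulli' 39 = 0 := bernoulli'_eq_zero_of_odd ⟨19, rfl⟩ (by norm_num)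
private theorem B'40 : bernoulli' 40 = (-261082718496449122051 : ℚ) / 13530 := by
  rw [bernoulli'_def]
  norm_num [Finset.sum_range_succ, Nat.choose, bernoulli'_zero, bernoulli'_one, bernoulli'_two, bernoulli'_three, bernoulli'_four, B'5, B'6, B'7, B'8, B'9, B'10, B'11, B'12, B'13, B'14, B'15, B'16, B'17, B'18, B'19, B'20, B'21, B'22, B'23, B'24, B'25, B'26, B'27, B'28, B'29, B'30, B'31, B'32, B'33, B'34, B'35, B'36, B'37, B'38, B'39]
private theorem B'41 : bernoulli' 41 = 0 := bernoulli'_eq_zero_of_odd ⟨20, rfl⟩ (by norm_num)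
private theorem B'42 : bernoulli' 42 = (1520097643918070802691 : ℚ) / 1806 := by
  rw [bernoulli'_def]
  norm_num [Finset.sum_range_succ, Nat.choose, bernoulli'_zero, bernoulli'_one, bernoulli'_two, bernoulli'_three, bernoulli'_four, B'5, B'6, B'7, B'8, B'9, B'10, B'11, B'12, B'13, B'14, B'15, B'16, B'17, B'18, B'19, B'20, B'21, B'22, B'23, B'24, B'25, B'26, B'27, B'28, B'29, B'30, B'31, B'32, B'33, B'34, B'35, B'36, B'37, B'38, B'39, B'40, B'41]
private theorem B'43 : bernoulli' 43 = 0 := bernoulli'_eq_zero_of_odd ⟨21, rfl⟩ (by norm_num)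
private theorem B'44 : bernoulli' 44 = (-27833269579301024235023 : ℚ) / 690 := by
  rw [bernoulli'_def]
  norm_num [Finset.sum_range_succ, Nat.choose, bernoulli'_zero, bernoulli'_one, bernoulli'_two, bernoulli'_three, bernoulli'_four, B'5, B'6, B'7, B'8, B'9, B'10, B'11, B'12, B'13, B'14, B'15, B'16, B'17, B'18, B'19, B'20, B'21, B'22, B'23, B'24, B'25, B'26, B'27, B'28, B'29, B'30, B'31, B'32, B'33, B'34, B'35, B'36, B'37, B'38, B'39, B'40, B'41, B'42, B'43]
private theorem B'45 : bernoulli' 45 = 0 := bernoulli'_eq_zero_of_odd ⟨22, rfl⟩ (by norm_num)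
private theorem B'46 : bernoulli' 46 = (596451111593912163277961 : ℚ) / 282 := by
  rw [bernoulli'_def]
  norm_num [Finset.sum_range_succ, Nat.choose, bernoulli'_zero, bernoulli'_one, bernoulli'_two, bernoulli'_three, bernoulli'_four, B'5, B'6, B'7, B'8, B'9, B'10, B'11, B'12, B'13, B'14, B'15, B'16, B'17, B'18, B'19, B'20, B'21, B'22, B'23, B'24, B'25, B'26, B'27, B'28, B'29, B'30, B'31, B'32, B'33, B'34, B'35, B'36, B'37, B'38, B'39, B'40, B'41, B'42, B'43, B'44, B'45]
private theorem B'47 : bernoulli' 47 = 0 := bernoulli'_eq_zero_of_odd ⟨23, rfl⟩ (by norm_num)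
private theorem B'48 : bernoulli' 48 = (-5609403368997817686249127547 : ℚ) / 46410 := by
  rw [bernoulli'_def]
  norm_num [Finset.sum_range_succ, Nat.choose, bernoulli'_zero, bernoulli'_one, bernoulli'_two, bernoulli'_three, bernoulli'_four, B'5, B'6, B'7, B'8, B'9, B'10, B'11, B'12, B'13, B'14, B'15, B'16, B'17, B'18, B'19, B'20, B'21, B'22, B'23, B'24, B'25, B'26, B'27, B'28, B'29, B'30, B'31, B'32, B'33, B'34, B'35, B'36, B'37, B'38, B'39, B'40, B'41, B'42, B'43, B'44, B'45, B'46, B'47]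
private theorem B'49 : bernoulli' 49 = 0 := bernoulli'_eq_zero_of_odd ⟨24, rfl⟩ (by norm_num)
private theorem B'50 : bernoulli' 50 = (495057205241079648212477525 : ℚ) / 66 := by
  rw [bernoulli'_def]
  norm_num [Finset.sum_range_succ, Nat.choose, bernoulli'_zero, bernoulli'_one, bernoulli'_two, bernoulli'_three, bernoulli'_four, B'5, B'6, B'7, B'8, B'9, B'10, B'11, B'12, B'13, B'14, B'15, B'16, B'17, B'18, B'19, B'20, B'21, B'22, B'23, B'24, B'25, B'26, B'27, B'28, B'29, B'30, B'31, B'32, B'33, B'34, B'35, B'36, B'37, B'38, B'39, B'40, B'41, B'42, B'43, B'44, B'45, B'46, B'47, B'48, B'49]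
private theorem B'51 : bernoulli' 51 = 0 := bernoulli'_eq_zero_of_odd ⟨25, rfl⟩ (by norm_num)
private theorem B'52 : bernoulli' 52 = (-801165718135489957347924991853 : ℚ) / 1590 := by
  rw [bernoulli'_def]
  norm_num [Finset.sum_range_succ, Nat.choose, bernoulli'_zero, bernoulli'_one, bernoulli'_two, bernoulli'_three, bernoulli'_four, B'5, B'6, B'7, B'8, B'9, B'10, B'11, B'12, B'13, B'14, B'15, B'16, B'17, B'18, B'19, B'20, B'21, B'22, B'23, B'24, B'25, B'26, B'27, B'28, B'29, B'30, B'31, B'32, B'33, B'34, B'35, B'36, B'37, B'38, B'39, B'40, B'41, B'42, B'43, B'44, B'45, B'46, B'47, B'48, B'49, B'50, B'51]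
private theorem B'53 : bernoulli' 53 = 0 := bernoulli'_eq_zero_of_odd ⟨26, rfl⟩ (by norm_num)
private theorem B'54 : bernoulli' 54 = (29149963634884862421418123812691 : ℚ) / 798 := by
  rw [bernoulli'_def]
  norm_num [Finset.sum_range_succ, Nat.choose, bernoulli'_zero, bernoulli'_one, bernoulli'_two, bernoulli'_three, bernoulli'_four, B'5, B'6, B'7, B'8, B'9, B'10, B'11, B'12, B'13, B'14, B'15, B'16, B'17, B'18, B'19, B'20, B'21, B'22, B'23, B'24, B'25, B'26, B'27, B'28, B'29, B'30, B'31, B'32, B'33, B'34, B'35, B'36, B'37, B'38, B'39, B'40, B'41, B'42, B'43, B'44, B'45, B'46, B'47, B'48, B'49, B'50, B'51, B'52, B'53]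
private theorem B'55 : bernoulli' 55 = 0 := bernoulli'_eq_zero_of_odd ⟨27, rfl⟩ (by norm_num)
private theorem B'56 : bernoulli' 56 = (-2479392929313226753685415739663229 : ℚ) / 870 := by
  rw [bernoulli'_def]
  norm_num [Finset.sum_range_succ, Nat.choose, bernoulli'_zero, bernoulli'_one, bernoulli'_two, bernoulli'_three, bernoulli'_four, B'5, B'6, B'7, B'8, B'9, B'10, B'11, B'12, B'13, B'14, B'15, B'16, B'17, B'18, B'19, B'20, B'21, B'22, B'23, B'24, B'25, B'26, B'27, B'28, B'29, B'30, B'31, B'32, B'33, B'34, B'35, B'36, B'37, B'38, B'39, B'40, B'41, B'42, B'43, B'44, B'45, B'46, B'47, B'48, B'49, B'50, B'51, B'52, B'53, B'54, B'55]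
private theorem B'57 : bernoulli' 57 = 0 := bernoulli'_eq_zero_of_odd ⟨28, rfl⟩ (by norm_num)
private theorem B'58 : bernoulli' 58 = (84483613348880041862046775994036021 : ℚ) / 354 := by
  rw [bernoulli'_def]
  norm_num [Finset.sum_range_succ, Nat.choose, bernoulli'_zero, bernoulli'_one, bernoulli'_two, bernoulli'_three, bernoulli'_four, B'5, B'6, B'7, B'8, B'9, B'10, B'11, B'12, B'13, B'14, B'15, B'16, B'17, B'18, B'19, B'20, B'21, B'22, B'23, B'24, B'25, B'26, B'27, B'28, B'29, B'30, B'31, B'32, B'33, B'34, B'35, B'36, B'37, B'38, B'39, B'40, B'41, B'42, B'43, B'44, B'45, B'46, B'47, B'48, B'49, B'50, B'51, B'52, B'53, B'54, B'55, B'56, B'57]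
private theorem B'59 : bernoulli' 59 = 0 := bernoulli'_eq_zero_of_odd ⟨29, rfl⟩ (by norm_num)
private theorem B'60 : bernoulli' 60 = (-1215233140483755572040304994079820246041491 : ℚ) / 56786730 := by
  rw [bernoulli'_def]
  norm_num [Finset.sum_range_succ, Nat.choose, bernoulli'_zero, bernoulli'_one, bernoulli'_two, bernoulli'_three, bernoulli'_four, B'5, B'6, B'7, B'8, B'9, B'10, B'11, B'12, B'13, B'14, B'15, B'16, B'17, B'18, B'19, B'20, B'21, B'22, B'23, B'24, B'25, B'26, B'27, B'28, B'29, B'30, B'31, B'32, B'33, B'34, B'35, B'36, B'37, B'38, B'39, B'40, B'41, B'42, B'43, B'44, B'45, B'46, B'47, B'48, B'49, B'50, B'51, B'52, B'53, B'54, B'55, B'56, B'57, B'58, B'59]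
private theorem B'61 : bernoulli' 61 = 0 := bernoulli'_eq_zero_of_odd ⟨30, rfl⟩ (by norm_num)
private theorem B'62 : bernoulli' 62 = (12300585434086858541953039857403386151 : ℚ) / 6 := by
  rw [bernoulli'_def]
  norm_num [Finset.sum_range_succ, Nat.choose, bernoulli'_zero, bernoulli'_one, bernoulli'_two, bernoulli'_three, bernoulli'_four, B'5, B'6, B'7, B'8, B'9, B'10, B'11, B'12, B'13, B'14, B'15, B'16, B'17, B'18, B'19, B'20, B'21, B'22, B'23, B'24, B'25, B'26, B'27, B'28, B'29, B'30, B'31, B'32, B'33, B'34, B'35, B'36, B'37, B'38, B'39, B'40, B'41, B'42, B'43, B'44, B'45, B'46, B'47, B'48, B'49, B'50, B'51, B'52, B'53, B'54, B'55, B'56, B'57, B'58, B'59, B'60, B'61]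
private theorem B'63 : bernoulli' 63 = 0 := bernoulli'_eq_zero_of_odd ⟨31, rfl⟩ (by norm_num)
private theorem B'64 : bernoulli' 64 = (-106783830147866529886385444979142647942017 : ℚ) / 510 := by
  rw [bernoulli'_def]
  norm_num [Finset.sum_range_succ, Nat.choose, bernoulli'_zero, bernoulli'_one, bernoulli'_two, bernoulli'_three, bernoulli'_four, B'5, B'6, B'7, B'8, B'9, B'10, B'11, B'12, B'13, B'14, B'15, B'16, B'17, B'18, B'19, B'20, B'21, B'22, B'23, B'24, B'25, B'26, B'27, B'28, B'29, B'30, B'31, B'32, B'33, B'34, B'35, B'36, B'37, B'38, B'39, B'40, B'41, B'42, B'43, B'44, B'45, B'46, B'47, B'48, B'49, B'50, B'51, B'52, B'53, B'54, B'55, B'56, B'57, B'58, B'59, B'60, B'61, B'62, B'63]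


private theorem a32 : |bernoulli 32| = (7709321041217 : ℚ) / 510 := by
  rw [bernoulli_eq_bernoulli'_of_ne_one (by norm_num), B'32, abs_of_nonpos (by norm_num)]
  norm_num

private theorem a64 : |bernoulli 64| = (106783830147866529886385444979142647942017 : ℚ) / 510 := by
  rw [bernoulli_eq_bernoulli'_of_ne_one (by norm_num), B'64, abs_of_nonpos (by norm_num)]
  norm_num

private theorem f32 : ((32)! : ℚ) = 263130836933693530167218012160000000 := by
  norm_num [Nat.factorial]

private theorem f64 : ((64)! : ℚ) = 126886932185884164103433389335161480802865516174545192198801894375214704230400000000000000 := by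
  norm_num [Nat.factorial]

private theorem hs16 : sL 16 = 16555640865486520478399 / 31245110285511170603633203125 := by
  rw [sL]
  norm_num [a32, f32]

private theorem hs32 : sL 32 = 20100142713756778191911006382652359986295781679578907558831 / 71593116982997763463418664949794449013036041871097806068940216064453125 := by
  rw [sL]
  norm_num [a64, f64]

private theorem hsLL : sLL 16 = -1799968583978556110446042044371306570661182963897 / 27535814224229909024391794211459403466552323796576079257284698486328125 := by
  rw [sLL, hs16, hs32]
  norm_num

/-- The signature equation for a 128-dimensional rational projective plane,
`s_(16,16) x² + s_32 y = ±1`, has an integer solution. -/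
theorem solution_dim_128 :
    ∃ x y : ℤ, sLL 16 * (x : ℚ) ^ 2 + sL 32 * (y : ℚ) = 1 ∨
      sLL 16 * (x : ℚ) ^ 2 + sL 32 * (y : ℚ) = -1 := by
  refine ⟨80010976949615601077226951646074096046733447556556405634125,
    1490521615909297511887200931502887618514821829216264414004967751849135455512340397821905316389565865380231250, Or.inl ?_⟩
  rw [hsLL, hs32]
  norm_num
end

section
/- Let k be a positive integer whose binary expansion has more than 5 nonzero bits (i.e. wt(k) > 5). Then there are no integers a and b such that s_{k,k}·a + s_{2k}·b = 8. (This is the arithmetic content of the proposition that the Milnor E₈ manifold M^{8k} does not have the rational homotopy type of a smooth manifold when wt(k) > 5; in particular this applies to k = 63, i.e. the 504-dimensional E₈ manifold.) -/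
open Nat

/-! ### Auxiliary 2-adic lemmas -/

lemma e8aux_norm_nat_le_one (n : ℕ) : ‖((n:ℚ) : ℚ_[2])‖ ≤ 1 := by
  have h1 : ‖((n:ℤ) : ℚ_[2])‖ ≤ 1 := Padic.norm_int_le_one _
  push_cast at h1 ⊢; exact h1

lemma e8aux_norm_odd_nat (n : ℕ) (h : n % 2 = 1) : ‖((n:ℚ) : ℚ_[2])‖ = 1 := by
  have h1 : ‖((n:ℤ) : ℚ_[2])‖ ≤ 1 := Padic.norm_int_le_one _
  have h2 : ¬ ‖((n:ℤ) : ℚ_[2])‖ < 1 := by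
    rw [Padic.norm_intCast_lt_one_iff]
    omega
  push_cast at h1 h2 ⊢
  linarith [lt_or_eq_of_le h1]

/-- The easy half of the von Staudt–Clausen theorem at the prime 2:
`2 * B_n` is a 2-adic integer, i.e. `‖B_n‖₂ ≤ 2`. -/
lemma e8aux_norm_bernoulli_le (n : ℕ) : ‖((bernoulli n : ℚ) : ℚ_[2])‖ ≤ 2 := by
  induction n using Nat.strong_induction_on with
  | _ n ih =>
    match n with
    | 0 => norm_num [bernoulli_zero]
    | 1 =>
      rw [bernoulli_one]
      have : ((-1/2 : ℚ) : ℚ_[2]) = -(((2:ℕ):ℚ_[2]))⁻¹ := by push_cast; ring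
      rw [this, norm_neg, norm_inv, Padic.norm_p]
      norm_num
    | (m + 2) =>
      rcases Nat.even_or_odd (m + 2) with he | ho
      · -- even case: use the recurrence
        have hs := sum_bernoulli (m + 3)
        rw [if_neg (by omega), Finset.sum_range_succ, Nat.choose_succ_self_right] at hs
        have key : ((m + 3 : ℕ) : ℚ) * bernoulli (m + 2) =
            -∑ k ∈ Finset.range (m + 2), ((m+3).choose k : ℚ) * bernoulli k := by
          linarith [hs]
        have hcast := congrArg (fun q : ℚ => ((q : ℚ_[2]))) key
        simp only [Rat.cast_mul, Rat.cast_neg, Rat.cast_sum, Rat.cast_natCast] at hcast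
        have hnorm : ‖((m + 3 : ℕ) : ℚ_[2])‖ * ‖((bernoulli (m+2) : ℚ) : ℚ_[2])‖ ≤ 2 := by
          rw [← norm_mul]
          calc ‖((m + 3 : ℕ) : ℚ_[2]) * ((bernoulli (m+2) : ℚ) : ℚ_[2])‖
              = ‖-∑ k ∈ Finset.range (m + 2),
                  (((m+3).choose k : ℕ) : ℚ_[2]) * ((bernoulli k : ℚ) : ℚ_[2])‖ := by
                rw [hcast]
            _ = ‖∑ k ∈ Finset.range (m + 2),
                  (((m+3).choose k : ℕ) : ℚ_[2]) * ((bernoulli k : ℚ) : ℚ_[2])‖ := norm_neg _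
            _ ≤ 2 := by
                apply IsUltrametricDist.norm_sum_le_of_forall_le_of_nonneg (by norm_num)
                intro i hi
                rw [norm_mul]
                have h1 : ‖(((m+3).choose i : ℕ) : ℚ_[2])‖ ≤ 1 := by
                  have := e8aux_norm_nat_le_one ((m+3).choose i)
                  push_cast at this ⊢; exact this
                have h2 := ih i (by simpa using hi)
                calc ‖(((m+3).choose i : ℕ) : ℚ_[2])‖ * ‖((bernoulli i : ℚ) : ℚ_[2])‖
                    ≤ 1 * 2 := mul_le_mul h1 h2 (norm_nonneg _) zero_le_one
                  _ = 2 := by ring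
        have hodd : ‖((m + 3 : ℕ) : ℚ_[2])‖ = 1 := by
          obtain ⟨t, ht⟩ := he
          have := e8aux_norm_odd_nat (m + 3) (by omega)
          push_cast at this ⊢; exact this
        rw [hodd, one_mul] at hnorm
        exact hnorm
      · -- odd ≥ 3: bernoulli = 0
        have : bernoulli (m + 2) = 0 := by
          rw [bernoulli]
          rw [bernoulli'_eq_zero_of_odd ho (by omega)]
          ring
        rw [this]
        norm_num

lemma e8aux_wt_le_self (n : ℕ) : wt n ≤ n := by
  induction n using Nat.strong_induction_on with
  | _ n ih =>
    rcases Nat.eq_zero_or_pos n with h | h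
    · simp [h, wt]
    · rw [wt, Nat.digits_def' (by norm_num : 1 < 2) h, List.sum_cons]
      have h1 := ih (n / 2) (Nat.div_lt_self h one_lt_two)
      rw [wt] at h1
      omega

lemma e8aux_wt_two_mul (k : ℕ) (hk : 0 < k) : wt (2 * k) = wt k := by
  rw [wt, wt, show 2 * k = 2 ^ 1 * k by ring,
    Nat.digits_base_pow_mul (by norm_num) hk]
  simp

lemma e8aux_padicValNat_two_factorial (n : ℕ) : padicValNat 2 (n !) = n - wt n := by
  have := sub_one_mul_padicValNat_factorial (p := 2) n
  rw [wt]; omega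

lemma e8aux_norm_factorial (n : ℕ) :
    ‖(((n ! : ℕ) : ℚ) : ℚ_[2])‖ = (2:ℝ) ^ (-((n - wt n : ℕ) : ℤ)) := by
  have h0 : (((n ! : ℕ):ℚ) : ℚ_[2]) = ((n ! : ℕ) : ℚ_[2]) := by push_cast; ring
  rw [h0, Padic.norm_eq_zpow_neg_valuation (by exact_mod_cast n.factorial_ne_zero),
    Padic.valuation_natCast, e8aux_padicValNat_two_factorial]
  norm_num

/-- The 2-adic norm of `sL k` is at most `2 ^ (1 - wt k)`. -/
lemma e8aux_norm_sL_le (k : ℕ) (hk : 0 < k) :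
    ‖((sL k : ℚ) : ℚ_[2])‖ ≤ (2:ℝ) ^ (1 - (wt k : ℤ)) := by
  have hcast : ((sL k : ℚ) : ℚ_[2]) =
      ((2:ℕ):ℚ_[2])^(2*k) * (((2^(2*k-1) - 1 : ℚ)):ℚ_[2]) *
        ((|bernoulli (2*k)| : ℚ):ℚ_[2]) * ((((2*k)! : ℕ):ℚ):ℚ_[2])⁻¹ := by
    rw [sL]; push_cast; ring
  rw [hcast]
  simp only [norm_mul, norm_inv]
  rw [Padic.norm_p_pow, e8aux_norm_factorial]
  have h2 : ‖((2 ^ (2 * k - 1) - 1 : ℚ) : ℚ_[2])‖ ≤ 1 := by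
    have h : (((2 ^ (2 * k - 1) - 1 : ℤ)) : ℚ_[2]) = ((2 ^ (2 * k - 1) - 1 : ℚ) : ℚ_[2]) := by
      push_cast; ring
    rw [← h]; exact Padic.norm_int_le_one _
  have h3 : ‖((|bernoulli (2 * k)| : ℚ) : ℚ_[2])‖ ≤ 2 := by
    rcases abs_cases (bernoulli (2 * k)) with ⟨h, _⟩ | ⟨h, _⟩ <;> rw [h]
    · exact e8aux_norm_bernoulli_le _
    · rw [Rat.cast_neg, norm_neg]; exact e8aux_norm_bernoulli_le _
  have hle : wt k ≤ 2 * k := le_trans (e8aux_wt_le_self k) (by omega)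
  have hexp : ((2 * k - wt (2 * k) : ℕ) : ℤ) = 2 * k - wt k := by
    rw [e8aux_wt_two_mul k hk]; omega
  rw [hexp, ← zpow_neg, neg_neg]
  calc (2:ℝ) ^ (-(2*k:ℕ):ℤ) * ‖((2 ^ (2 * k - 1) - 1 : ℚ) : ℚ_[2])‖ *
        ‖((|bernoulli (2 * k)| : ℚ) : ℚ_[2])‖ * (2:ℝ) ^ ((2*k : ℤ) - wt k)
      ≤ (2:ℝ) ^ (-(2*k:ℕ):ℤ) * 1 * 2 * (2:ℝ) ^ ((2*k : ℤ) - wt k) := by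
        gcongr <;> positivity
    _ = (2:ℝ) ^ ((-(2*k:ℕ):ℤ) + 1 + ((2*k : ℤ) - wt k)) := by
        rw [mul_one, zpow_add₀ (two_ne_zero : (2:ℝ) ≠ 0), zpow_add₀ (two_ne_zero : (2:ℝ) ≠ 0),
          zpow_one]
    _ = (2:ℝ) ^ (1 - (wt k : ℤ)) := by congr 1; push_cast; ring

/-- If `k` is a positive integer with more than 5 nonzero bits in its binary expansion,
then there are no integers `a`, `b` with `s_(k,k) a + s_(2k) b = 8`: the Milnor E₈
manifold `M^(8k)` does not have the rational homotopy type of a smooth manifold. -/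
theorem e8_no_solution_of_five_lt_wt (k : ℕ) (hk : 0 < k) (hwt : 5 < wt k) :
    ¬ ∃ a b : ℤ, sLL k * (a : ℚ) + sL (2 * k) * (b : ℚ) = 8 := by
  rintro ⟨a, b, h⟩
  have hw : (6 : ℤ) ≤ (wt k : ℤ) := by exact_mod_cast hwt
  have h1 : ‖((sL k : ℚ) : ℚ_[2])‖ ≤ (2:ℝ) ^ (1 - (wt k : ℤ)) := e8aux_norm_sL_le k hk
  have h2 : ‖((sL (2*k) : ℚ) : ℚ_[2])‖ ≤ (2:ℝ) ^ (1 - (wt k : ℤ)) := by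
    have := e8aux_norm_sL_le (2*k) (by omega)
    rwa [e8aux_wt_two_mul k hk] at this
  have hpos : (0:ℝ) < (2:ℝ) ^ (1 - (wt k : ℤ)) := by positivity
  have hsq : ‖(((sL k)^2 : ℚ) : ℚ_[2])‖ ≤ (2:ℝ) ^ (1 - (wt k : ℤ)) := by
    rw [Rat.cast_pow, norm_pow]
    calc ‖((sL k : ℚ) : ℚ_[2])‖^2 ≤ ((2:ℝ) ^ (1 - (wt k : ℤ)))^2 := by
          exact pow_le_pow_left₀ (norm_nonneg _) h1 2
      _ = (2:ℝ) ^ ((1 - (wt k : ℤ)) * 2) := by rw [← zpow_natCast, ← zpow_mul]; norm_num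
      _ ≤ (2:ℝ) ^ (1 - (wt k : ℤ)) := by
          apply zpow_le_zpow_right₀ one_le_two
          omega
  have hLL : ‖((sLL k : ℚ) : ℚ_[2])‖ ≤ (2:ℝ) ^ (2 - (wt k : ℤ)) := by
    have hcast : ((sLL k : ℚ) : ℚ_[2]) =
        ((((sL k)^2 : ℚ) : ℚ_[2]) + -((sL (2*k) : ℚ) : ℚ_[2])) * (((2:ℕ):ℚ_[2]))⁻¹ := by
      rw [sLL]; push_cast; ring
    rw [hcast, norm_mul, norm_inv, Padic.norm_p]
    have hsum : ‖(((sL k)^2 : ℚ) : ℚ_[2]) + -((sL (2*k) : ℚ) : ℚ_[2])‖ ≤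
        (2:ℝ) ^ (1 - (wt k : ℤ)) := by
      refine le_trans (Padic.nonarchimedean _ _) ?_
      rw [norm_neg]
      exact max_le hsq h2
    calc ‖(((sL k)^2 : ℚ) : ℚ_[2]) + -((sL (2*k) : ℚ) : ℚ_[2])‖ * (((2:ℕ):ℝ))⁻¹⁻¹
        ≤ (2:ℝ) ^ (1 - (wt k : ℤ)) * 2 := by
          rw [inv_inv]
          gcongr
          norm_num
      _ = (2:ℝ) ^ (2 - (wt k : ℤ)) := by
          rw [show (2 - (wt k : ℤ)) = (1 - (wt k : ℤ)) + 1 by ring,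
            zpow_add₀ (two_ne_zero : (2:ℝ) ≠ 0), zpow_one]
  -- cast the equation to ℚ_[2]
  have hq := congrArg (fun q : ℚ => ((q : ℚ_[2]))) h
  simp only [Rat.cast_add, Rat.cast_mul, Rat.cast_intCast, Rat.cast_ofNat] at hq
  have hnorm8 : ‖(8 : ℚ_[2])‖ = (8:ℝ)⁻¹ := by
    have h8 : (8 : ℚ_[2]) = ((2:ℕ):ℚ_[2])^(3:ℕ) := by push_cast; norm_num
    rw [h8, Padic.norm_p_pow]
    norm_num
  have hbound : ‖((sLL k : ℚ) : ℚ_[2]) * ((a:ℤ) : ℚ_[2]) +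
      ((sL (2*k) : ℚ) : ℚ_[2]) * ((b:ℤ) : ℚ_[2])‖ ≤ (2:ℝ) ^ (2 - (wt k : ℤ)) := by
    refine le_trans (Padic.nonarchimedean _ _) (max_le ?_ ?_)
    · rw [norm_mul]
      calc ‖((sLL k : ℚ) : ℚ_[2])‖ * ‖((a:ℤ) : ℚ_[2])‖
          ≤ (2:ℝ) ^ (2 - (wt k : ℤ)) * 1 :=
            mul_le_mul hLL (Padic.norm_int_le_one a) (norm_nonneg _) (by positivity)
        _ = (2:ℝ) ^ (2 - (wt k : ℤ)) := mul_one _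
    · rw [norm_mul]
      calc ‖((sL (2*k) : ℚ) : ℚ_[2])‖ * ‖((b:ℤ) : ℚ_[2])‖
          ≤ (2:ℝ) ^ (1 - (wt k : ℤ)) * 1 :=
            mul_le_mul h2 (Padic.norm_int_le_one b) (norm_nonneg _) (by positivity)
        _ ≤ (2:ℝ) ^ (2 - (wt k : ℤ)) := by
            rw [mul_one]
            apply zpow_le_zpow_right₀ one_le_two
            omega
  rw [hq, hnorm8] at hbound
  have hsmall : (2:ℝ) ^ (2 - (wt k : ℤ)) ≤ (2:ℝ) ^ (-4 : ℤ) := by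
    apply zpow_le_zpow_right₀ one_le_two
    omega
  have hcontr : (8:ℝ)⁻¹ ≤ (16:ℝ)⁻¹ := by
    calc (8:ℝ)⁻¹ ≤ (2:ℝ) ^ (2 - (wt k : ℤ)) := hbound
      _ ≤ (2:ℝ) ^ (-4 : ℤ) := hsmall
      _ = (16:ℝ)⁻¹ := by norm_num
  norm_num at hcontr
end
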